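/- Assume R satisfies skew-symmetry (i), the AYBE (ii), trigonometric unitarity (iii-trig), regularity (iv) with residue the identity, and quasi-periodicity (v). Define the additional Hamiltonian 𝓘^∨ := Σ_{1≤i<j≤n} (λ_i−λ_j)·R̄_{ij} ∘ s^∨_{ij}, where (λ_i−λ_j) denotes multiplication by that scalar function of λ. Then 𝓘^∨ commutes with the deformed spin chain Hamiltonian: 𝓗₂^∨ ∘ 𝓘^∨ = 𝓘^∨ ∘ 𝓗₂^∨ as operators on holomorphic U-valued functions of λ ∈ Λ. (This exhibits the integrable deformation of the Sechin–Zotov spin chain.) -/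

import Mathlib

open Finset Kronecker

noncomputable section

/-- `D = ℂ ∖ 2πℤ`. -/
def Dtrig : Set ℂ := {z | ∀ m : ℤ, z ≠ 2 * (Real.pi : ℂ) * (m : ℂ)}

/-- Matrices modelling `End(ℂ^d ⊗ ℂ^d)`. -/
abbrev M2 (d : ℕ) := Matrix (Fin d × Fin d) (Fin d × Fin d) ℂ

/-- The flip `P(u ⊗ v) = v ⊗ u` on `ℂ^d ⊗ ℂ^d`. -/
def flipM (d : ℕ) : M2 d := fun p q => if p.1 = q.2 ∧ p.2 = q.1 then 1 else 0

/-- Tensor-leg placement `T_{ij}`. -/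
def leg {n d : ℕ} (T : M2 d) (i j : Fin n) :
    Matrix (Fin n → Fin d) (Fin n → Fin d) ℂ :=
  fun a b => T (a i, a j) (b i, b j) *
    ∏ k ∈ univ.filter (fun k => k ≠ i ∧ k ≠ j), (if a k = b k then (1 : ℂ) else 0)

/-- Property (i): skew-symmetry. -/
def SkewSym {d : ℕ} (D : Set ℂ) (R : ℂ → ℂ → M2 d) : Prop :=
  ∀ z ∈ D, ∀ μ ∈ D, R (-z) (-μ) = - (flipM d * R z μ * flipM d)

/-- Property (ii): the associative Yang–Baxter equation. -/
def AYBE {d : ℕ} (D : Set ℂ) (R : ℂ → ℂ → M2 d) : Prop :=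
  ∀ z z' μ μ' : ℂ, z ∈ D → z' ∈ D → z + z' ∈ D → μ ∈ D → μ' ∈ D →
    μ - μ' ∈ D → μ' - μ ∈ D →
    leg (n := 3) (R z μ) 0 1 * leg (n := 3) (R z' μ') 1 2 =
      leg (n := 3) (R (z + z') μ') 0 2 * leg (n := 3) (R z (μ - μ')) 0 1 +
      leg (n := 3) (R z' (μ' - μ)) 1 2 * leg (n := 3) (R (z + z') μ) 0 2

/-- Property (iii-trig): trigonometric unitarity. -/
def UnitarityTrig {d : ℕ} (D : Set ℂ) (R : ℂ → ℂ → M2 d) : Prop :=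
  ∀ z ∈ D, ∀ μ ∈ D, R z μ * (flipM d * R (-z) μ * flipM d) =
    (1 / (4 * Complex.sin (μ / 2) ^ 2) - 1 / (4 * Complex.sin (z / 2) ^ 2)) • 1

/-- Property (iv): regularity with residue the identity (entrywise, locally uniform). -/
def RegularityId {d : ℕ} (D : Set ℂ) (R : ℂ → ℂ → M2 d) (r : ℂ → M2 d) : Prop :=
  ∀ a b, TendstoLocallyUniformlyOn (fun μ z => R z μ a b - (1 : M2 d) a b / μ)
    (fun z => r z a b) (nhdsWithin (0 : ℂ) {(0 : ℂ)}ᶜ) D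

/-- Property (v): quasi-periodicity with respect to an invertible `Q ∈ End(ℂ^d)`. -/
def QuasiPeriodic {d : ℕ} (D : Set ℂ) (R : ℂ → ℂ → M2 d)
    (Q Qinv : Matrix (Fin d) (Fin d) ℂ) : Prop :=
  Q * Qinv = 1 ∧ Qinv * Q = 1 ∧
  ∀ z ∈ D, ∀ μ ∈ D,
    R z (μ + 2 * (Real.pi : ℂ)) = (Qinv ⊗ₖ (1 : Matrix (Fin d) (Fin d) ℂ)) * R z μ *
      ((1 : Matrix (Fin d) (Fin d) ℂ) ⊗ₖ Q) ∧
    (Q ⊗ₖ Q) * R z μ = R z μ * (Q ⊗ₖ Q)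

/-- The derivative `∂_z R` of `R` in its first argument (entrywise). -/
def dzR {d : ℕ} (R : ℂ → ℂ → M2 d) : ℂ → ℂ → M2 d :=
  fun z μ a b => deriv (fun t => R t μ a b) z

/-- The equilibrium differences `2π(i−j)/n`. -/
def znum (n : ℕ) (i j : Fin n) : ℂ :=
  2 * (Real.pi : ℂ) * (((i : ℕ) : ℂ) - ((j : ℕ) : ℂ)) / (n : ℂ)

/-- The spin space `U = (ℂ^d)^{⊗ n}`. -/
abbrev Uspin (n d : ℕ) := (Fin n → Fin d) → ℂ

/-- The operator `σ^∨`: `(σ^∨ F)(λ) = F(σ⁻¹·λ)`, acting only on the argument `λ`. -/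
def svee {n d : ℕ} (σ : Equiv.Perm (Fin n)) (F : (Fin n → ℂ) → Uspin n d) :
    (Fin n → ℂ) → Uspin n d :=
  fun lam => F (lam ∘ σ)

/-- The 3-cycle `i ↦ j ↦ k ↦ i`. -/
def cyc3 {n : ℕ} (i j k : Fin n) : Equiv.Perm (Fin n) :=
  Equiv.swap i j * Equiv.swap j k

/-- The deformed principal spin chain Hamiltonian `𝓗₂^∨ = Σ_{i<j} ∂R̄_{ij} ∘ s^∨_{ij}`. -/
def H2vee {n d : ℕ} (R : ℂ → ℂ → M2 d) (F : (Fin n → ℂ) → Uspin n d) :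
    (Fin n → ℂ) → Uspin n d :=
  fun lam => ∑ q ∈ univ.filter (fun q : Fin n × Fin n => q.1 < q.2),
    (leg (dzR R (znum n q.1 q.2) (lam q.1 - lam q.2)) q.1 q.2).mulVec
      (svee (Equiv.swap q.1 q.2) F lam)

/-- The additional Hamiltonian `𝓘^∨ = Σ_{i<j} (λ_i−λ_j)·R̄_{ij} ∘ s^∨_{ij}`. -/
def Ivee {n d : ℕ} (R : ℂ → ℂ → M2 d) (F : (Fin n → ℂ) → Uspin n d) :
    (Fin n → ℂ) → Uspin n d :=
  fun lam => ∑ q ∈ univ.filter (fun q : Fin n × Fin n => q.1 < q.2),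
    (lam q.1 - lam q.2) •
      (leg (R (znum n q.1 q.2) (lam q.1 - lam q.2)) q.1 q.2).mulVec
        (svee (Equiv.swap q.1 q.2) F lam)

/-!
Both sides are double sums over pairs `p = (i, j)`, `q = (k, l)` with `i < j`, `k < l`, of
`∂R̄_p R̄_q` resp. `R̄_q ∂R̄_p` applied to `F (λ ∘ s_p ∘ s_q)` resp. `F (λ ∘ s_q ∘ s_p)`; the
difference of the two sums is sorted by how `p` and `q` meet.
* Disjoint pairs cancel termwise: the two legs act on different tensor factors and commute.
* For `p = q` the `z`-derivative of unitarity, `R(z, μ) R(z, -μ) = (φ z - φ μ) • 1` with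
  `φ t = 1 / (4 sin² (t / 2))`, leaves `-(λ_i - λ_j) φ'(2π(i - j)/n) • F λ`; these sum to zero
  because `φ'` is odd and `2π`-periodic.
* The six terms with `p ≠ q` inside a triple `a < b < c` split along the two 3-cycles
  `s_ab s_bc` and `s_bc s_ab`. Each group of three cancels by `μ' ∂_z - μ ∂_{z'}` applied to the
  AYBE at `z = 2π(a - b)/n`, `z' = 2π(b - c)/n` (for the second cycle, to the AYBE with its legs
  reordered by skew-symmetry), since `z + z' = 2π(a - c)/n`.
-/

open Filter Topology

lemma mem_Dtrig_iff {z : ℂ} : z ∈ Dtrig ↔ Complex.sin (z / 2) ≠ 0 := by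
  rw [Ne, Complex.sin_eq_zero_iff, not_exists]
  refine forall_congr' fun m => not_congr ⟨fun h => by rw [h]; ring, fun h => ?_⟩
  linear_combination 2 * h

lemma isOpen_Dtrig : IsOpen Dtrig := by
  rw [show Dtrig = {z | Complex.sin (z / 2) ≠ 0} from Set.ext fun _ => mem_Dtrig_iff]
  exact isOpen_ne_fun (by fun_prop) continuous_const

lemma neg_mem_Dtrig {z : ℂ} (hz : z ∈ Dtrig) : -z ∈ Dtrig := by
  rw [mem_Dtrig_iff] at hz ⊢
  rwa [neg_div, Complex.sin_neg, neg_ne_zero]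

lemma eventually_mem_Dtrig_add {z z' : ℂ} (hz : z ∈ Dtrig) (hz' : z' ∈ Dtrig)
    (hzz' : z + z' ∈ Dtrig) :
    ∀ᶠ p : ℂ × ℂ in 𝓝 (z, z'), p.1 ∈ Dtrig ∧ p.2 ∈ Dtrig ∧ p.1 + p.2 ∈ Dtrig := by
  filter_upwards [(isOpen_Dtrig.prod isOpen_Dtrig).mem_nhds (Set.mk_mem_prod hz hz'),
    (isOpen_Dtrig.preimage continuous_add).mem_nhds hzz'] with p hp hp'
  exact ⟨hp.1, hp.2, hp'⟩

lemma znum_swap (n : ℕ) (i j : Fin n) : znum n j i = -znum n i j := by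
  simp only [znum]; ring

lemma znum_add_znum (n : ℕ) (i j k : Fin n) : znum n i j + znum n j k = znum n i k := by
  simp only [znum]; ring

lemma znum_mem_Dtrig {n : ℕ} {i j : Fin n} (hij : i ≠ j) : znum n i j ∈ Dtrig := by
  intro m hm
  have hn : (n : ℂ) ≠ 0 := Nat.cast_ne_zero.2 (Fin.pos i).ne'
  have hpi : (2 * Real.pi : ℂ) ≠ 0 := by exact_mod_cast Real.two_pi_pos.ne'
  have h : ((i : ℕ) : ℤ) - (j : ℕ) = n * m := by
    rw [znum, div_eq_iff hn] at hm
    have : ((i : ℕ) : ℂ) - (j : ℕ) = n * m := mul_left_cancel₀ hpi (by linear_combination hm)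
    exact_mod_cast this
  have := Int.eq_zero_of_abs_lt_dvd ⟨m, h⟩ (abs_sub_lt_iff.2 ⟨by omega, by omega⟩)
  exact hij (Fin.ext (by omega))

lemma exists_znum_add_self_sub {n : ℕ} [NeZero n] (i j : Fin n) :
    ∃ m : ℤ, znum n i (i + i - j) = znum n j i + 2 * Real.pi * m := by
  have hn : (n : ℂ) ≠ 0 := Nat.cast_ne_zero.2 (NeZero.ne n)
  rw [znum, znum, Fin.val_sub, Fin.val_add]
  have h₁ := Nat.mod_add_div (i + i : ℕ) n
  generalize (i + i : ℕ) % n = r₁ at h₁ ⊢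
  have h₂ := Nat.mod_add_div (n - j + r₁) n
  generalize (n - j + r₁) % n = r₂ at h₂ ⊢
  generalize (i + i : ℕ) / n = q₁ at h₁
  generalize (n - j + r₁) / n = q₂ at h₂
  refine ⟨q₁ + q₂ - 1, ?_⟩
  rw [div_add' _ _ _ hn, div_left_inj' hn]
  have h₁' : (r₁ : ℂ) + n * q₁ = i + i := by exact_mod_cast h₁
  have h₂' : (r₂ : ℂ) + n * q₂ = n - j + r₁ := by
    rw [← Nat.cast_sub j.is_lt.le]; exact_mod_cast h₂
  push_cast
  linear_combination (-2 * Real.pi : ℂ) * (h₁' + h₂')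

abbrev orderedPairs (α : Type*) [LinearOrder α] [Fintype α] : Finset (α × α) :=
  univ.filter fun p => p.1 < p.2

abbrev orderedTriples (α : Type*) [LinearOrder α] [Fintype α] : Finset (α × α × α) :=
  univ.filter fun t => t.1 < t.2.1 ∧ t.2.1 < t.2.2

section Combinatorics

variable {α M : Type*} [LinearOrder α] [Fintype α] [AddCommMonoid M]

/-- The six ordered pairs `(p, q)` of distinct two-element subsets of a triple `a < b < c`. -/
def sharedPairs (t : α × α × α) : Fin 6 → (α × α) × (α × α) :=
  ![((t.1, t.2.1), (t.2.1, t.2.2)), ((t.2.1, t.2.2), (t.1, t.2.1)),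
    ((t.1, t.2.1), (t.1, t.2.2)), ((t.1, t.2.2), (t.1, t.2.1)),
    ((t.1, t.2.2), (t.2.1, t.2.2)), ((t.2.1, t.2.2), (t.1, t.2.2))]

abbrev PairsDisjoint (r : (α × α) × (α × α)) : Prop :=
  r.1.1 ≠ r.2.1 ∧ r.1.1 ≠ r.2.2 ∧ r.1.2 ≠ r.2.1 ∧ r.1.2 ≠ r.2.2

lemma sum_orderedPairs_add_swap (h : α → α → M) :
    ∑ p ∈ orderedPairs α, (h p.1 p.2 + h p.2 p.1) + ∑ i, h i i = ∑ i, ∑ j, h i j := by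
  rw [← Fintype.sum_prod_type',
    ← Finset.sum_filter_add_sum_filter_not univ (fun p : α × α => p.1 < p.2),
    ← Finset.sum_filter_add_sum_filter_not (univ.filter fun p : α × α => ¬p.1 < p.2)
      (fun p : α × α => p.2 < p.1), Finset.sum_add_distrib, add_assoc]
  congr 2
  · refine Finset.sum_nbij' Prod.swap Prod.swap ?_ ?_ (fun _ _ => rfl) (fun _ _ => rfl)
      (fun _ _ => rfl) <;> intro p hp <;>
      simp only [Finset.mem_filter, Finset.mem_univ, true_and, Prod.fst_swap,
        Prod.snd_swap] at hp ⊢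
    · exact ⟨hp.not_gt, hp⟩
    · exact hp.2
  · refine Finset.sum_nbij' (fun i => (i, i)) Prod.fst ?_ ?_ ?_ ?_ (fun _ _ => rfl)
    · intro i _; simp
    · intro p _; simp
    · intro i _; rfl
    · intro p hp
      simp only [Finset.mem_filter, Finset.mem_univ, true_and, not_lt] at hp
      exact Prod.ext rfl (le_antisymm hp.2 hp.1)

lemma sharedPairs_mapsTo {x : (α × α × α) × Fin 6}
    (hx : x ∈ orderedTriples α ×ˢ (univ : Finset (Fin 6))) :
    sharedPairs x.1 x.2 ∈
      ((orderedPairs α ×ˢ orderedPairs α).filter fun r => ¬PairsDisjoint r).filter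
        fun r => r.1 ≠ r.2 := by
  obtain ⟨⟨a, b, c⟩, m⟩ := x
  simp only [Finset.mem_product, Finset.mem_filter, Finset.mem_univ, true_and, and_true] at hx
  fin_cases m <;>
    simp only [sharedPairs, Fin.zero_eta, Fin.mk_one, Fin.reduceFinMk, Matrix.cons_val,
      Finset.mem_filter, Finset.mem_product, Finset.mem_univ, true_and] <;> grind

lemma sharedPairs_injOn :
    Set.InjOn (fun x : (α × α × α) × Fin 6 => sharedPairs x.1 x.2)
      ↑(orderedTriples α ×ˢ (univ : Finset (Fin 6))) := by
  rintro ⟨⟨a, b, c⟩, k⟩ hx ⟨⟨a', b', c'⟩, k'⟩ hx' h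
  simp only [Finset.coe_product, Set.mem_prod, Finset.mem_coe, Finset.mem_filter,
    Finset.mem_univ, true_and, and_true] at hx hx'
  fin_cases k <;> fin_cases k' <;>
    simp only [sharedPairs, Fin.zero_eta, Fin.mk_one, Fin.reduceFinMk, Matrix.cons_val,
      Prod.mk.injEq] at h <;> grind

lemma sharedPairs_surjOn :
    Set.SurjOn (fun x : (α × α × α) × Fin 6 => sharedPairs x.1 x.2)
      ↑(orderedTriples α ×ˢ (univ : Finset (Fin 6)))
      ↑(((orderedPairs α ×ˢ orderedPairs α).filter fun r => ¬PairsDisjoint r).filter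
        fun r => r.1 ≠ r.2) := by
  rintro ⟨⟨i, j⟩, ⟨k, l⟩⟩ hr
  simp only [Finset.coe_filter, Finset.mem_product, Finset.mem_filter, Finset.mem_univ,
    true_and, Set.mem_ofPred_eq, PairsDisjoint, ne_eq, Prod.mk.injEq] at hr
  obtain ⟨⟨⟨hij, hkl⟩, hshare⟩, hne⟩ := hr
  have hmem : ∀ {a b c : α}, a < b → b < c → (a, b, c) ∈ orderedTriples α :=
    fun hab hbc => by simp [hab, hbc]
  have key : ∃ t ∈ orderedTriples α, ∃ m : Fin 6, sharedPairs t m = ((i, j), (k, l)) := by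
    rcases (by tauto : i = k ∨ i = l ∨ j = k ∨ j = l) with h | h | h | h
    · rcases lt_or_gt_of_ne (fun hjl => hne ⟨h, hjl⟩) with hjl | hlj
      · exact ⟨(i, j, l), hmem hij hjl, 2, by simp [sharedPairs, h]⟩
      · exact ⟨(i, l, j), hmem (h ▸ hkl) hlj, 3, by simp [sharedPairs, h]⟩
    · exact ⟨(k, i, j), hmem (h ▸ hkl) hij, 1, by simp [sharedPairs, h]⟩
    · exact ⟨(i, j, l), hmem hij (h ▸ hkl), 0, by simp [sharedPairs, h]⟩
    · rcases lt_or_gt_of_ne (fun hik => hne ⟨hik, h⟩) with hik | hki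
      · exact ⟨(i, k, j), hmem hik (h ▸ hkl), 4, by simp [sharedPairs, h]⟩
      · exact ⟨(k, i, j), hmem hki hij, 5, by simp [sharedPairs, h]⟩
  obtain ⟨t, ht, m, hm⟩ := key
  exact ⟨(t, m), Finset.mem_product.2 ⟨ht, Finset.mem_univ m⟩, hm⟩

lemma sum_orderedPairs_orderedPairs (f : α × α → α × α → M) :
    ∑ p ∈ orderedPairs α, ∑ q ∈ orderedPairs α, f p q =
      ∑ p ∈ orderedPairs α, f p p
      + ∑ t ∈ orderedTriples α, ∑ m, f (sharedPairs t m).1 (sharedPairs t m).2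
      + ∑ r ∈ (orderedPairs α ×ˢ orderedPairs α).filter PairsDisjoint, f r.1 r.2 := by
  rw [← Finset.sum_product' _ _ f, ← Finset.sum_filter_add_sum_filter_not _ PairsDisjoint,
    ← Finset.sum_filter_add_sum_filter_not
      ((orderedPairs α ×ˢ orderedPairs α).filter fun r => ¬PairsDisjoint r) fun r => r.1 = r.2,
    add_comm]
  congr 2
  · refine Finset.sum_nbij' Prod.fst (fun p => (p, p)) ?_ ?_ ?_ ?_ ?_
    · intro r hr
      exact (Finset.mem_product.1 (Finset.mem_filter.1 (Finset.mem_filter.1 hr).1).1).1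
    · intro p hp
      simp [hp, PairsDisjoint]
    · intro r hr
      exact Prod.ext rfl (Finset.mem_filter.1 hr).2
    · intro p _
      rfl
    · intro r hr
      rw [(Finset.mem_filter.1 hr).2]
  · rw [← Finset.sum_product']
    exact (Finset.sum_nbij _ (fun _ hx => sharedPairs_mapsTo hx) sharedPairs_injOn
      sharedPairs_surjOn fun _ _ => rfl).symm

end Combinatorics

def invFourSinSqHalf (t : ℂ) : ℂ := (4 * Complex.sin (t / 2) ^ 2)⁻¹

lemma invFourSinSqHalf_neg (t : ℂ) : invFourSinSqHalf (-t) = invFourSinSqHalf t := by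
  simp [invFourSinSqHalf, neg_div, Complex.sin_neg]

lemma invFourSinSqHalf_add_two_pi (t : ℂ) :
    invFourSinSqHalf (t + 2 * Real.pi) = invFourSinSqHalf t := by
  simp [invFourSinSqHalf, add_div, Complex.sin_add_pi, mul_div_cancel_left₀]

lemma differentiableAt_invFourSinSqHalf {z : ℂ} (hz : z ∈ Dtrig) :
    DifferentiableAt ℂ invFourSinSqHalf z :=
  ((by fun_prop : Differentiable ℂ fun t : ℂ => 4 * Complex.sin (t / 2) ^ 2) z).inv
    (mul_ne_zero (by norm_num) (pow_ne_zero 2 (mem_Dtrig_iff.1 hz)))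

lemma deriv_invFourSinSqHalf_neg (t : ℂ) :
    deriv invFourSinSqHalf (-t) = -deriv invFourSinSqHalf t := by
  have h := deriv_comp_neg invFourSinSqHalf t
  simp only [invFourSinSqHalf_neg] at h
  rw [h, neg_neg]

lemma deriv_invFourSinSqHalf_add_int_mul (t : ℂ) (m : ℤ) :
    deriv invFourSinSqHalf (t + 2 * Real.pi * m) = deriv invFourSinSqHalf t := by
  have hper : Function.Periodic (deriv invFourSinSqHalf) (2 * Real.pi) := fun t => by
    rw [← deriv_comp_add_const]
    simp only [invFourSinSqHalf_add_two_pi]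
  rw [mul_comm]
  exact hper.int_mul m t

/-- `j ↦ i + i - j` permutes `Fin n` and turns `znum n i j` into `-znum n i j` modulo `2π`. -/
lemma sum_deriv_invFourSinSqHalf_znum {n : ℕ} (i : Fin n) :
    ∑ j, deriv invFourSinSqHalf (znum n i j) = 0 := by
  have : NeZero n := ⟨(Fin.pos i).ne'⟩
  have hreflect : ∀ j, deriv invFourSinSqHalf (znum n i (i + i - j)) =
      -deriv invFourSinSqHalf (znum n i j) := fun j => by
    obtain ⟨m, hm⟩ := exists_znum_add_self_sub i j
    rw [hm, deriv_invFourSinSqHalf_add_int_mul, znum_swap, deriv_invFourSinSqHalf_neg]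
  have h := Equiv.sum_comp (Equiv.subLeft (i + i)) fun j => deriv invFourSinSqHalf (znum n i j)
  simpa only [Equiv.subLeft_apply, hreflect, Finset.sum_neg_distrib, neg_eq_self] using h

lemma sum_orderedPairs_sub_mul_deriv_invFourSinSqHalf {n : ℕ} (lam : Fin n → ℂ) :
    ∑ p ∈ orderedPairs (Fin n),
      (lam p.1 - lam p.2) * deriv invFourSinSqHalf (znum n p.1 p.2) = 0 := by
  have hdiag : ∀ i : Fin n, deriv invFourSinSqHalf (znum n i i) = 0 := fun i => by
    have h := deriv_invFourSinSqHalf_neg (znum n i i)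
    rwa [← znum_swap, self_eq_neg] at h
  have h := sum_orderedPairs_add_swap fun i j => lam i * deriv invFourSinSqHalf (znum n i j)
  simp only [hdiag, mul_zero, Finset.sum_const_zero, add_zero, ← Finset.mul_sum,
    sum_deriv_invFourSinSqHalf_znum] at h
  rw [← h]
  refine Finset.sum_congr rfl fun p _ => ?_
  rw [znum_swap n p.1 p.2, deriv_invFourSinSqHalf_neg]
  ring

section OnSites

variable {α β γ V K : Type*} [CommSemiring K]

open Classical in
/-- `A` acting on the tensor factors selected by `ι`, and as the identity on the others. -/
def onSites (ι : α → β) : Matrix (α → V) (α → V) K →ₗ[K] Matrix (β → V) (β → V) K where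
  toFun A := Matrix.of fun x y =>
    if Set.EqOn x y (Set.range ι)ᶜ then A (x ∘ ι) (y ∘ ι) else 0
  map_add' A B := by
    ext x y; simp only [Matrix.of_apply, Matrix.add_apply]; split_ifs <;> simp
  map_smul' c A := by
    ext x y; simp only [Matrix.of_apply, Matrix.smul_apply]; split_ifs <;> simp

open Classical in
lemma onSites_apply (ι : α → β) (A : Matrix (α → V) (α → V) K) (x y : β → V) :
    onSites ι A x y = if Set.EqOn x y (Set.range ι)ᶜ then A (x ∘ ι) (y ∘ ι) else 0 :=
  rfl

lemma onSites_one [Fintype α] [Fintype β] [DecidableEq V] {ι : α → β} :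
    onSites ι (1 : Matrix (α → V) (α → V) K) = 1 := by
  classical
  ext x y
  rw [onSites_apply, Matrix.one_apply, Matrix.one_apply]
  by_cases hxy : x = y
  · subst hxy; simp [Set.EqOn]
  · rw [if_neg hxy]
    split_ifs with h h'
    · refine absurd (funext fun m => ?_) hxy
      by_cases hm : m ∈ Set.range ι
      · obtain ⟨a, rfl⟩ := hm
        exact congrFun h' a
      · exact h hm
    · rfl
    · rfl

lemma onSites_mul [Fintype α] [DecidableEq α] [Fintype β] [DecidableEq β] [Fintype V]
    {ι : α → β} (hι : Function.Injective ι) (A B : Matrix (α → V) (α → V) K) :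
    onSites ι (A * B) = onSites ι A * onSites ι B := by
  classical
  ext x y
  simp only [onSites_apply, Matrix.mul_apply, ite_zero_mul_ite_zero]
  by_cases hxy : Set.EqOn x y (Set.range ι)ᶜ
  · rw [if_pos hxy]
    have hsplit : ∀ c : β → V, (Set.EqOn x c (Set.range ι)ᶜ ∧ Set.EqOn c y (Set.range ι)ᶜ) ↔
        Set.EqOn x c (Set.range ι)ᶜ := fun c =>
      ⟨And.left, fun h => ⟨h, h.symm.trans hxy⟩⟩
    simp only [hsplit]
    rw [← Finset.sum_filter]
    refine (Finset.sum_nbij' (fun c => c ∘ ι) (fun u => Function.extend ι u x)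
      ?_ ?_ ?_ ?_ ?_).symm
    · simp
    · intro u _
      simp only [Finset.mem_filter, Finset.mem_univ, true_and]
      exact fun m hm => (Function.extend_apply' _ _ _ hm).symm
    · intro c hc
      simp only [Finset.mem_filter, Finset.mem_univ, true_and] at hc
      funext m
      by_cases hm : m ∈ Set.range ι
      · obtain ⟨a, rfl⟩ := hm
        exact hι.extend_apply _ _ _
      · exact (Function.extend_apply' _ _ _ hm).trans (hc hm)
    · intro u _
      exact Function.extend_comp hι _ _
    · intro c _
      rfl
  · rw [if_neg hxy]
    exact (Finset.sum_eq_zero fun c _ => if_neg fun h => hxy (h.1.trans h.2)).symm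

lemma onSites_onSites {κ : β → γ} (hκ : Function.Injective κ) (ι : α → β)
    (A : Matrix (α → V) (α → V) K) : onSites κ (onSites ι A) = onSites (κ ∘ ι) A := by
  classical
  ext x y
  have hcond : Set.EqOn x y (Set.range κ)ᶜ ∧ Set.EqOn (x ∘ κ) (y ∘ κ) (Set.range ι)ᶜ ↔
      Set.EqOn x y (Set.range (κ ∘ ι))ᶜ := by
    refine ⟨fun ⟨h₁, h₂⟩ m hm => ?_,
      fun h => ⟨fun m hm => h fun hm' => hm ?_, fun b hb => h ?_⟩⟩
    · by_cases hmκ : m ∈ Set.range κ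
      · obtain ⟨b, rfl⟩ := hmκ
        exact h₂ fun ⟨a, ha⟩ => hm ⟨a, by simp [ha]⟩
      · exact h₁ hmκ
    · exact Set.range_comp_subset_range ι κ hm'
    · rintro ⟨a, ha⟩
      exact hb ⟨a, hκ ha⟩
  simp only [onSites_apply, ← ite_and, hcond]
  rfl

open Classical in
lemma onSites_mul_onSites_apply [Fintype β] [Fintype V] [DecidableEq β]
    {ι : α → β} {κ : γ → β} (hικ : Disjoint (Set.range ι) (Set.range κ))
    (A : Matrix (α → V) (α → V) K) (B : Matrix (γ → V) (γ → V) K) (x y : β → V) :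
    (onSites ι A * onSites κ B) x y = if Set.EqOn x y (Set.range ι ∪ Set.range κ)ᶜ then
      A (x ∘ ι) (y ∘ ι) * B (x ∘ κ) (y ∘ κ) else 0 := by
  obtain ⟨c₀, hc₀⟩ : ∃ c₀ : β → V, c₀ = (Set.range ι).piecewise y x := ⟨_, rfl⟩
  have hcond : ∀ c, (Set.EqOn x c (Set.range ι)ᶜ ∧ Set.EqOn c y (Set.range κ)ᶜ) ↔
      (c = c₀ ∧ Set.EqOn x y (Set.range ι ∪ Set.range κ)ᶜ) := by
    intro c
    constructor
    · rintro ⟨h₁, h₂⟩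
      refine ⟨funext fun m => ?_, fun m hm => ?_⟩
      · by_cases hm : m ∈ Set.range ι
        · rw [hc₀, Set.piecewise_eq_of_mem _ _ _ hm]
          exact h₂ (hικ.notMem_of_mem_left hm)
        · rw [hc₀, Set.piecewise_eq_of_notMem _ _ _ hm]
          exact (h₁ hm).symm
      · rw [Set.compl_union] at hm
        exact (h₁ hm.1).trans (h₂ hm.2)
    · rintro ⟨rfl, h⟩
      refine ⟨fun m hm => by rw [hc₀, Set.piecewise_eq_of_notMem _ _ _ hm], fun m hm => ?_⟩
      by_cases hmι : m ∈ Set.range ι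
      · rw [hc₀, Set.piecewise_eq_of_mem _ _ _ hmι]
      · rw [hc₀, Set.piecewise_eq_of_notMem _ _ _ hmι]
        exact h (by rw [Set.compl_union]; exact ⟨hmι, hm⟩)
  have hι : c₀ ∘ ι = y ∘ ι :=
    funext fun a => hc₀ ▸ Set.piecewise_eq_of_mem _ _ _ (Set.mem_range_self a)
  have hκ : c₀ ∘ κ = x ∘ κ := funext fun a =>
    hc₀ ▸ Set.piecewise_eq_of_notMem _ _ _ (hικ.notMem_of_mem_right (Set.mem_range_self a))
  simp only [Matrix.mul_apply, onSites_apply, ite_zero_mul_ite_zero, hcond, ite_and,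
    Finset.sum_ite_eq', Finset.mem_univ, if_true, hι, hκ]

lemma commute_onSites [Fintype β] [Fintype V] [DecidableEq β]
    {ι : α → β} {κ : γ → β} (hικ : Disjoint (Set.range ι) (Set.range κ))
    (A : Matrix (α → V) (α → V) K) (B : Matrix (γ → V) (γ → V) K) :
    Commute (onSites ι A) (onSites κ B) := by
  ext x y
  rw [onSites_mul_onSites_apply hικ, onSites_mul_onSites_apply hικ.symm, Set.union_comm,
    mul_comm]

end OnSites

section Legs

variable {n d : ℕ}

abbrev twoSite (T : M2 d) : Matrix (Fin 2 → Fin d) (Fin 2 → Fin d) ℂ :=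
  Matrix.reindexAlgEquiv ℂ ℂ (piFinTwoEquiv fun _ => Fin d).symm T

lemma leg_eq_onSites (T : M2 d) (i j : Fin n) : leg T i j = onSites ![i, j] (twoSite T) := by
  classical
  ext x y
  rw [onSites_apply, leg, Finset.prod_boole, mul_ite, mul_one, mul_zero]
  congr 1
  simp only [Finset.mem_filter, Finset.mem_univ, true_and, Set.EqOn, Matrix.range_cons,
    Matrix.range_empty, Set.union_empty, Set.compl_union, Set.mem_inter_iff, Set.mem_compl_iff,
    Set.mem_singleton_iff, and_imp]

lemma injective_pair {i j : Fin n} (hij : i ≠ j) : Function.Injective ![i, j] := by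
  intro a b h
  fin_cases a <;> fin_cases b <;> simp_all [eq_comm]

lemma injective_triple {i j k : Fin n} (hij : i ≠ j) (hjk : j ≠ k) (hik : i ≠ k) :
    Function.Injective ![i, j, k] := by
  intro a b h
  fin_cases a <;> fin_cases b <;> simp_all [eq_comm]

lemma leg_add (T S : M2 d) (i j : Fin n) : leg (T + S) i j = leg T i j + leg S i j := by
  simp only [leg_eq_onSites, map_add]

lemma leg_smul (c : ℂ) (T : M2 d) (i j : Fin n) : leg (c • T) i j = c • leg T i j := by
  simp only [leg_eq_onSites, map_smul]

lemma leg_neg (T : M2 d) (i j : Fin n) : leg (-T) i j = -leg T i j := by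
  simp only [leg_eq_onSites, map_neg]

lemma leg_one {i j : Fin n} : leg (1 : M2 d) i j = 1 := by
  rw [leg_eq_onSites, twoSite, map_one, onSites_one]

lemma leg_mul_leg {i j : Fin n} (hij : i ≠ j) (T S : M2 d) :
    leg T i j * leg S i j = leg (T * S) i j := by
  simp only [leg_eq_onSites, map_mul, onSites_mul (injective_pair hij)]

lemma onSites_leg {m : ℕ} {κ : Fin m → Fin n} (hκ : Function.Injective κ) (T : M2 d)
    (a b : Fin m) : onSites κ (leg T a b) = leg T (κ a) (κ b) := by
  rw [leg_eq_onSites, leg_eq_onSites, onSites_onSites hκ]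
  congr 2
  ext k
  fin_cases k <;> rfl

lemma commute_leg {i j k l : Fin n} (hik : i ≠ k) (hil : i ≠ l) (hjk : j ≠ k) (hjl : j ≠ l)
    (T S : M2 d) : Commute (leg T i j) (leg S k l) := by
  rw [leg_eq_onSites, leg_eq_onSites]
  refine commute_onSites (Set.disjoint_left.2 ?_) _ _
  simp [Matrix.range_cons, *]

lemma flipM_mul_apply (T : M2 d) (p q : Fin d × Fin d) : (flipM d * T) p q = T p.swap q := by
  have h : ∀ r : Fin d × Fin d, (p.1 = r.2 ∧ p.2 = r.1) ↔ p.swap = r := fun r => by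
    simp [Prod.ext_iff, and_comm, eq_comm]
  simp only [Matrix.mul_apply, flipM, h, ite_mul, one_mul, zero_mul, Finset.sum_ite_eq,
    Finset.mem_univ, if_true]

lemma mul_flipM_apply (T : M2 d) (p q : Fin d × Fin d) : (T * flipM d) p q = T p q.swap := by
  have h : ∀ r : Fin d × Fin d, (r.1 = q.2 ∧ r.2 = q.1) ↔ q.swap = r := fun r => by
    simp [Prod.ext_iff, eq_comm]
  simp only [Matrix.mul_apply, flipM, h, mul_ite, mul_one, mul_zero, Finset.sum_ite_eq,
    Finset.mem_univ, if_true]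

lemma flipM_mul_mul_flipM_apply (T : M2 d) (p q : Fin d × Fin d) :
    (flipM d * T * flipM d) p q = T p.swap q.swap := by
  rw [mul_flipM_apply, flipM_mul_apply]

lemma flipM_mul_flipM : flipM d * flipM d = 1 := by
  ext p q
  simpa [Matrix.one_apply] using flipM_mul_mul_flipM_apply (1 : M2 d) p q

lemma leg_swap (T : M2 d) (i j : Fin n) : leg T j i = leg (flipM d * T * flipM d) i j := by
  ext x y
  simp only [leg, flipM_mul_mul_flipM_apply, Prod.swap_prod_mk]
  congr 1
  exact Finset.prod_congr (Finset.filter_congr fun _ _ => and_comm) fun _ _ => rfl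

end Legs

def AYBERel {A : Type*} [Ring A] (X Y Z : ℂ → ℂ → A) (z z' μ μ' : ℂ) : Prop :=
  X z μ * Y z' μ' = Z (z + z') μ' * X z (μ - μ') + Y z' (μ' - μ) * Z (z + z') μ

section RMatrixAlgebra

variable {n d : ℕ} {R : ℂ → ℂ → M2 d}

abbrev legFamily (R : ℂ → ℂ → M2 d) (i j : Fin n) :
    ℂ → ℂ → Matrix (Fin n → Fin d) (Fin n → Fin d) ℂ :=
  fun s ν => leg (R s ν) i j

lemma aybeRel_legFamily (haybe : AYBE Dtrig R) {i j k : Fin n}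
    (hij : i ≠ j) (hjk : j ≠ k) (hik : i ≠ k) {z z' μ μ' : ℂ} (hz : z ∈ Dtrig)
    (hz' : z' ∈ Dtrig) (hzz' : z + z' ∈ Dtrig) (hμ : μ ∈ Dtrig) (hμ' : μ' ∈ Dtrig)
    (hμμ' : μ - μ' ∈ Dtrig) (hμ'μ : μ' - μ ∈ Dtrig) :
    AYBERel (legFamily R i j) (legFamily R j k) (legFamily R i k) z z' μ μ' := by
  have hκ := injective_triple hij hjk hik
  have h := congrArg (onSites ![i, j, k]) (haybe z z' μ μ' hz hz' hzz' hμ hμ' hμμ' hμ'μ)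
  simp only [map_add, onSites_mul hκ, onSites_leg hκ, Matrix.cons_val_zero, Matrix.cons_val_one,
    Matrix.cons_val_two, Matrix.head_cons, Matrix.tail_cons] at h
  exact h

lemma leg_swap_of_skewSym (hskew : SkewSym Dtrig R) {z μ : ℂ} (hz : z ∈ Dtrig)
    (hμ : μ ∈ Dtrig) (i j : Fin n) : leg (R z μ) j i = -leg (R (-z) (-μ)) i j := by
  rw [leg_swap, ← leg_neg, hskew z hz μ hμ, neg_neg]

lemma aybeRel_legFamily_of_skewSym (haybe : AYBE Dtrig R) (hskew : SkewSym Dtrig R)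
    {i j k : Fin n} (hij : i ≠ j) (hjk : j ≠ k) (hik : i ≠ k) {z z' μ μ' : ℂ} (hz : z ∈ Dtrig)
    (hz' : z' ∈ Dtrig) (hzz' : z + z' ∈ Dtrig) (hμ : μ ∈ Dtrig) (hμ' : μ' ∈ Dtrig)
    (hμμ' : μ - μ' ∈ Dtrig) (hμ'μ : μ' - μ ∈ Dtrig) :
    AYBERel (legFamily R j k) (legFamily R i j) (legFamily R i k) z z' μ μ' := by
  have hflip : ∀ {s ν : ℂ}, s ∈ Dtrig → ν ∈ Dtrig → ∀ p q : Fin n,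
      leg (R (-s) (-ν)) q p = -leg (R s ν) p q := fun hs hν p q => by
    simpa only [neg_neg] using
      leg_swap_of_skewSym hskew (neg_mem_Dtrig hs) (neg_mem_Dtrig hν) p q
  have h := aybeRel_legFamily haybe hjk.symm hij.symm hik.symm (neg_mem_Dtrig hz)
    (neg_mem_Dtrig hz') (by rw [← neg_add]; exact neg_mem_Dtrig hzz') (neg_mem_Dtrig hμ)
    (neg_mem_Dtrig hμ') (by rwa [neg_sub_neg]) (by rwa [neg_sub_neg])
  simp only [AYBERel, legFamily] at h ⊢
  rw [show -z + -z' = -(z + z') by ring, show -μ - -μ' = -(μ - μ') by ring,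
    show -μ' - -μ = -(μ' - μ) by ring, hflip hz hμ, hflip hz' hμ', hflip hzz' hμ', hflip hz hμμ',
    hflip hz' hμ'μ, hflip hzz' hμ] at h
  simpa only [neg_mul_neg] using h

lemma R_mul_R_neg (hskew : SkewSym Dtrig R) (hunit : UnitarityTrig Dtrig R) {z μ : ℂ}
    (hz : z ∈ Dtrig) (hμ : μ ∈ Dtrig) :
    R z μ * R z (-μ) = (invFourSinSqHalf z - invFourSinSqHalf μ) • 1 := by
  have hflip : flipM d * R (-z) μ * flipM d = -R z (-μ) := by
    rw [← neg_neg μ, hskew z hz (-μ) (neg_mem_Dtrig hμ), neg_neg]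
    simp only [Matrix.mul_neg, Matrix.neg_mul, ← mul_assoc, flipM_mul_flipM, one_mul]
    rw [mul_assoc, flipM_mul_flipM, mul_one]
  have h := hunit z hz μ hμ
  rw [hflip, Matrix.mul_neg, neg_eq_iff_eq_neg, ← neg_smul] at h
  rw [h, invFourSinSqHalf, invFourSinSqHalf]
  congr 1
  ring

end RMatrixAlgebra

section Derivatives

/- Any Banach-algebra norm on square matrices would do: it only serves to differentiate
products of matrix-valued functions. -/
attribute [local instance] Matrix.linftyOpNormedRing Matrix.linftyOpNormedAlgebra

lemma hasDerivAt_matrix_of_entries {ι : Type*} [Fintype ι] [DecidableEq ι]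
    {A : ℂ → Matrix ι ι ℂ} {A' : Matrix ι ι ℂ} {z : ℂ}
    (h : ∀ a b, HasDerivAt (fun t => A t a b) (A' a b) z) : HasDerivAt A A' z := by
  have hsum : HasDerivAt (fun t => ∑ a, ∑ b, Matrix.single a b (A t a b))
      (∑ a, ∑ b, Matrix.single a b (A' a b)) z := by
    refine HasDerivAt.fun_sum fun a _ => HasDerivAt.fun_sum fun b _ => ?_
    simpa only [Matrix.smul_single, smul_eq_mul, mul_one] using
      (h a b).smul_const (Matrix.single a b (1 : ℂ))
  simpa only [← Matrix.matrix_eq_sum_single] using hsum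

/-- `μ'` times the `z`-derivative minus `μ` times the `z'`-derivative of the relation. -/
lemma AYBERel.hasDerivAt_combination {𝔸 : Type*} [NormedRing 𝔸] [NormedAlgebra ℂ 𝔸]
    {X Y Z X' Y' Z' : ℂ → ℂ → 𝔸} {z z' μ μ' : ℂ}
    (h : ∀ᶠ p in 𝓝 (z, z'), AYBERel X Y Z p.1 p.2 μ μ')
    (hX₁ : HasDerivAt (X · μ) (X' z μ) z) (hX₂ : HasDerivAt (X · (μ - μ')) (X' z (μ - μ')) z)
    (hY₁ : HasDerivAt (Y · μ') (Y' z' μ') z')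
    (hY₂ : HasDerivAt (Y · (μ' - μ)) (Y' z' (μ' - μ)) z')
    (hZ₁ : HasDerivAt (Z · μ') (Z' (z + z') μ') (z + z'))
    (hZ₂ : HasDerivAt (Z · μ) (Z' (z + z') μ) (z + z')) :
    μ' • (X' z μ * Y z' μ') + μ • (Y' z' (μ' - μ) * Z (z + z') μ)
      + (μ - μ') • (Z' (z + z') μ' * X z (μ - μ'))
    = μ • (X z μ * Y' z' μ') + (μ' - μ) • (Y z' (μ' - μ) * Z' (z + z') μ)
      + μ' • (Z (z + z') μ' * X' z (μ - μ')) := by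
  have hz : X' z μ * Y z' μ' = Z' (z + z') μ' * X z (μ - μ') + Z (z + z') μ' * X' z (μ - μ')
      + Y z' (μ' - μ) * Z' (z + z') μ := by
    have hrel : ∀ᶠ t in 𝓝 z, AYBERel X Y Z t z' μ μ' :=
      ((continuous_id.prodMk continuous_const).tendsto z).eventually h
    have hM := ((hZ₁.comp_add_const z z').mul hX₂).add
      ((hZ₂.comp_add_const z z').const_mul (Y z' (μ' - μ)))
    exact (hX₁.mul_const (Y z' μ')).unique (hM.congr_of_eventuallyEq hrel)
  have hz' : X z μ * Y' z' μ' = Z' (z + z') μ' * X z (μ - μ') + Y' z' (μ' - μ) * Z (z + z') μ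
      + Y z' (μ' - μ) * Z' (z + z') μ := by
    have hrel : ∀ᶠ t in 𝓝 z', AYBERel X Y Z z t μ μ' :=
      ((continuous_const.prodMk continuous_id).tendsto z').eventually h
    have hM := ((hZ₁.comp_const_add z z').mul_const (X z (μ - μ'))).add
      (hY₂.mul (hZ₂.comp_const_add z z'))
    rw [add_assoc]
    exact (hY₁.const_mul (X z μ)).unique (hM.congr_of_eventuallyEq hrel)
  linear_combination (norm := module) μ' • hz - μ • hz'

variable {n d : ℕ} {R : ℂ → ℂ → M2 d}

lemma hasDerivAt_R_apply
    (hRhol : ∀ a b, DifferentiableOn ℂ (fun p : ℂ × ℂ => R p.1 p.2 a b) (Dtrig ×ˢ Dtrig))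
    {z μ : ℂ} (hz : z ∈ Dtrig) (hμ : μ ∈ Dtrig) (a b : Fin d × Fin d) :
    HasDerivAt (fun t => R t μ a b) (dzR R z μ a b) z := by
  have hdiff := (hRhol a b).differentiableAt
    ((isOpen_Dtrig.prod isOpen_Dtrig).mem_nhds (Set.mk_mem_prod hz hμ))
  exact (hdiff.comp z (differentiableAt_id.prodMk (differentiableAt_const μ))).hasDerivAt

lemma hasDerivAt_leg_R
    (hRhol : ∀ a b, DifferentiableOn ℂ (fun p : ℂ × ℂ => R p.1 p.2 a b) (Dtrig ×ˢ Dtrig))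
    {z μ : ℂ} (hz : z ∈ Dtrig) (hμ : μ ∈ Dtrig) (i j : Fin n) :
    HasDerivAt (fun t => leg (R t μ) i j) (leg (dzR R z μ) i j) z :=
  hasDerivAt_matrix_of_entries fun a b =>
    (hasDerivAt_R_apply hRhol hz hμ (a i, a j) (b i, b j)).mul_const _

lemma AYBERel.legFamily_combination
    (hRhol : ∀ a b, DifferentiableOn ℂ (fun p : ℂ × ℂ => R p.1 p.2 a b) (Dtrig ×ˢ Dtrig))
    {i₁ j₁ i₂ j₂ i₃ j₃ : Fin n} {z z' μ μ' : ℂ}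
    (hrel : ∀ s s', s ∈ Dtrig → s' ∈ Dtrig → s + s' ∈ Dtrig →
      AYBERel (legFamily R i₁ j₁) (legFamily R i₂ j₂) (legFamily R i₃ j₃) s s' μ μ')
    (hz : z ∈ Dtrig) (hz' : z' ∈ Dtrig) (hzz' : z + z' ∈ Dtrig) (hμ : μ ∈ Dtrig)
    (hμ' : μ' ∈ Dtrig) (hμμ' : μ - μ' ∈ Dtrig) (hμ'μ : μ' - μ ∈ Dtrig) :
    μ' • (leg (dzR R z μ) i₁ j₁ * leg (R z' μ') i₂ j₂)
      + μ • (leg (dzR R z' (μ' - μ)) i₂ j₂ * leg (R (z + z') μ) i₃ j₃)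
      + (μ - μ') • (leg (dzR R (z + z') μ') i₃ j₃ * leg (R z (μ - μ')) i₁ j₁)
    = μ • (leg (R z μ) i₁ j₁ * leg (dzR R z' μ') i₂ j₂)
      + (μ' - μ) • (leg (R z' (μ' - μ)) i₂ j₂ * leg (dzR R (z + z') μ) i₃ j₃)
      + μ' • (leg (R (z + z') μ') i₃ j₃ * leg (dzR R z (μ - μ')) i₁ j₁) := by
  have h := AYBERel.hasDerivAt_combination (X' := legFamily (dzR R) i₁ j₁)
    (Y' := legFamily (dzR R) i₂ j₂) (Z' := legFamily (dzR R) i₃ j₃)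
    ((eventually_mem_Dtrig_add hz hz' hzz').mono fun p hp => hrel _ _ hp.1 hp.2.1 hp.2.2)
    (hasDerivAt_leg_R hRhol hz hμ _ _) (hasDerivAt_leg_R hRhol hz hμμ' _ _)
    (hasDerivAt_leg_R hRhol hz' hμ' _ _) (hasDerivAt_leg_R hRhol hz' hμ'μ _ _)
    (hasDerivAt_leg_R hRhol hzz' hμ' _ _) (hasDerivAt_leg_R hRhol hzz' hμ _ _)
  exact h

lemma dzR_mul_R_neg_add
    (hRhol : ∀ a b, DifferentiableOn ℂ (fun p : ℂ × ℂ => R p.1 p.2 a b) (Dtrig ×ˢ Dtrig))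
    (hskew : SkewSym Dtrig R) (hunit : UnitarityTrig Dtrig R) {z μ : ℂ}
    (hz : z ∈ Dtrig) (hμ : μ ∈ Dtrig) :
    dzR R z μ * R z (-μ) + R z μ * dzR R z (-μ) = deriv invFourSinSqHalf z • 1 := by
  have hrel : (fun t => R t μ * R t (-μ)) =ᶠ[𝓝 z]
      fun t => (invFourSinSqHalf t - invFourSinSqHalf μ) • (1 : M2 d) := by
    filter_upwards [isOpen_Dtrig.mem_nhds hz] with t ht
    exact R_mul_R_neg hskew hunit ht hμ
  have hR : ∀ {ν}, ν ∈ Dtrig → HasDerivAt (fun t => R t ν) (dzR R z ν) z := fun hν =>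
    hasDerivAt_matrix_of_entries (hasDerivAt_R_apply hRhol hz hν)
  have hM := ((differentiableAt_invFourSinSqHalf hz).hasDerivAt.sub_const
    (invFourSinSqHalf μ)).smul_const (1 : M2 d)
  exact ((hR hμ).mul (hR (neg_mem_Dtrig hμ))).unique (hM.congr_of_eventuallyEq hrel)

end Derivatives

section Hamiltonians

variable {n d : ℕ}

abbrev EndU (n d : ℕ) := Matrix (Fin n → Fin d) (Fin n → Fin d) ℂ

def H2veeCoeff (R : ℂ → ℂ → M2 d) (p : Fin n × Fin n) (lam : Fin n → ℂ) : EndU n d :=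
  leg (dzR R (znum n p.1 p.2) (lam p.1 - lam p.2)) p.1 p.2

def IveeCoeff (R : ℂ → ℂ → M2 d) (p : Fin n × Fin n) (lam : Fin n → ℂ) : EndU n d :=
  (lam p.1 - lam p.2) • leg (R (znum n p.1 p.2) (lam p.1 - lam p.2)) p.1 p.2

def pairOp (A : Fin n × Fin n → (Fin n → ℂ) → EndU n d) (F : (Fin n → ℂ) → Uspin n d) :
    (Fin n → ℂ) → Uspin n d :=
  fun lam => ∑ p ∈ orderedPairs (Fin n), (A p lam).mulVec (svee (Equiv.swap p.1 p.2) F lam)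

lemma H2vee_eq_pairOp (R : ℂ → ℂ → M2 d) (F : (Fin n → ℂ) → Uspin n d) :
    H2vee R F = pairOp (H2veeCoeff R) F :=
  rfl

lemma Ivee_eq_pairOp (R : ℂ → ℂ → M2 d) (F : (Fin n → ℂ) → Uspin n d) :
    Ivee R F = pairOp (IveeCoeff R) F :=
  funext fun _ => Finset.sum_congr rfl fun _ _ => (Matrix.smul_mulVec _ _ _).symm

def commKernel (A B : Fin n × Fin n → (Fin n → ℂ) → EndU n d) (F : (Fin n → ℂ) → Uspin n d)
    (lam : Fin n → ℂ) (p q : Fin n × Fin n) : Uspin n d :=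
  (A p lam * B q (lam ∘ Equiv.swap p.1 p.2)).mulVec
      (F (lam ∘ Equiv.swap p.1 p.2 ∘ Equiv.swap q.1 q.2))
    - (B q lam * A p (lam ∘ Equiv.swap q.1 q.2)).mulVec
      (F (lam ∘ Equiv.swap q.1 q.2 ∘ Equiv.swap p.1 p.2))

lemma pairOp_pairOp_sub (A B : Fin n × Fin n → (Fin n → ℂ) → EndU n d)
    (F : (Fin n → ℂ) → Uspin n d) (lam : Fin n → ℂ) :
    pairOp A (pairOp B F) lam - pairOp B (pairOp A F) lam =
      ∑ p ∈ orderedPairs (Fin n), ∑ q ∈ orderedPairs (Fin n), commKernel A B F lam p q := by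
  simp only [pairOp, svee, commKernel, Matrix.mulVec_sum, Matrix.mulVec_mulVec,
    Function.comp_assoc]
  conv_lhs => enter [2]; rw [Finset.sum_comm]
  rw [← Finset.sum_sub_distrib]
  exact Finset.sum_congr rfl fun p _ => (Finset.sum_sub_distrib _ _).symm

lemma comp_swap_comm {α β : Type*} [DecidableEq α] (lam : α → β) {i j k l : α} (hik : i ≠ k)
    (hil : i ≠ l) (hjk : j ≠ k) (hjl : j ≠ l) :
    lam ∘ Equiv.swap i j ∘ Equiv.swap k l = lam ∘ Equiv.swap k l ∘ Equiv.swap i j := by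
  funext m
  simp only [Function.comp_apply, Equiv.swap_apply_def]
  split_ifs <;> simp_all

lemma comp_swap_swap_cycle {α β : Type*} [DecidableEq α] (lam : α → β) {a b c : α}
    (hab : a ≠ b) (hbc : b ≠ c) (hac : a ≠ c) :
    (lam ∘ Equiv.swap b c ∘ Equiv.swap a c = lam ∘ Equiv.swap a b ∘ Equiv.swap b c ∧
      lam ∘ Equiv.swap a c ∘ Equiv.swap a b = lam ∘ Equiv.swap a b ∘ Equiv.swap b c) ∧
    (lam ∘ Equiv.swap a c ∘ Equiv.swap b c = lam ∘ Equiv.swap b c ∘ Equiv.swap a b ∧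
      lam ∘ Equiv.swap a b ∘ Equiv.swap a c = lam ∘ Equiv.swap b c ∘ Equiv.swap a b) := by
  refine ⟨⟨?_, ?_⟩, ?_, ?_⟩ <;> funext m <;>
    simp only [Function.comp_apply, Equiv.swap_apply_def] <;> split_ifs <;> simp_all

variable {R : ℂ → ℂ → M2 d}

lemma commKernel_self
    (hRhol : ∀ a b, DifferentiableOn ℂ (fun p : ℂ × ℂ => R p.1 p.2 a b) (Dtrig ×ˢ Dtrig))
    (hskew : SkewSym Dtrig R) (hunit : UnitarityTrig Dtrig R) (F : (Fin n → ℂ) → Uspin n d)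
    {lam : Fin n → ℂ} {i j : Fin n} (hij : i ≠ j) (hlam : lam i - lam j ∈ Dtrig) :
    commKernel (H2veeCoeff R) (IveeCoeff R) F lam (i, j) (i, j) =
      -((lam i - lam j) * deriv invFourSinSqHalf (znum n i j)) • F lam := by
  have hmat : leg (dzR R (znum n i j) (lam i - lam j)) i j
        * leg (R (znum n i j) (-(lam i - lam j))) i j
      + leg (R (znum n i j) (lam i - lam j)) i j
        * leg (dzR R (znum n i j) (-(lam i - lam j))) i j
      = deriv invFourSinSqHalf (znum n i j) • 1 := by
    rw [leg_mul_leg hij, leg_mul_leg hij, ← leg_add,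
      dzR_mul_R_neg_add hRhol hskew hunit (znum_mem_Dtrig hij) hlam, leg_smul, leg_one]
  have hmatv := congrArg (fun M => M.mulVec (F lam)) hmat
  simp only [Matrix.add_mulVec, Matrix.smul_mulVec, Matrix.one_mulVec] at hmatv
  have hswap : lam ∘ Equiv.swap i j ∘ Equiv.swap i j = lam := by
    funext m; simp
  simp only [commKernel, H2veeCoeff, IveeCoeff, Function.comp_apply, Equiv.swap_apply_left,
    Equiv.swap_apply_right, hswap, Matrix.mul_smul, Matrix.smul_mul, Matrix.smul_mulVec]
  rw [show lam j - lam i = -(lam i - lam j) by ring]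
  linear_combination (norm := module) -(lam i - lam j) • hmatv

lemma commKernel_eq_zero_of_disjoint (F : (Fin n → ℂ) → Uspin n d) (lam : Fin n → ℂ)
    {i j k l : Fin n} (hik : i ≠ k) (hil : i ≠ l) (hjk : j ≠ k) (hjl : j ≠ l) :
    commKernel (H2veeCoeff R) (IveeCoeff R) F lam (i, j) (k, l) = 0 := by
  simp only [commKernel, H2veeCoeff, IveeCoeff, Function.comp_apply,
    Equiv.swap_apply_of_ne_of_ne hik hil, Equiv.swap_apply_of_ne_of_ne hjk hjl,
    Equiv.swap_apply_of_ne_of_ne hik.symm hjk.symm,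
    Equiv.swap_apply_of_ne_of_ne hil.symm hjl.symm, comp_swap_comm lam hik hil hjk hjl,
    Matrix.mul_smul, Matrix.smul_mul, (commute_leg hik hil hjk hjl _ _).eq, sub_self]

lemma sum_commKernel_sharedPairs_eq_zero
    (hRhol : ∀ a b, DifferentiableOn ℂ (fun p : ℂ × ℂ => R p.1 p.2 a b) (Dtrig ×ˢ Dtrig))
    (haybe : AYBE Dtrig R) (hskew : SkewSym Dtrig R) (F : (Fin n → ℂ) → Uspin n d)
    {lam : Fin n → ℂ} (hlam : ∀ i j, i ≠ j → lam i - lam j ∈ Dtrig) {a b c : Fin n}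
    (hab : a ≠ b) (hbc : b ≠ c) (hac : a ≠ c) :
    ∑ m, commKernel (H2veeCoeff R) (IveeCoeff R) F lam (sharedPairs (a, b, c) m).1
      (sharedPairs (a, b, c) m).2 = 0 := by
  have hzac : znum n a b + znum n b c ∈ Dtrig := by
    rw [znum_add_znum]; exact znum_mem_Dtrig hac
  have hcb : lam a - lam b - (lam a - lam c) ∈ Dtrig := by
    rw [sub_sub_sub_cancel_left]; exact hlam c b hbc.symm
  have hbc' : lam a - lam c - (lam a - lam b) ∈ Dtrig := by
    rw [sub_sub_sub_cancel_left]; exact hlam b c hbc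
  have hba : lam b - lam c - (lam a - lam c) ∈ Dtrig := by
    rw [sub_sub_sub_cancel_right]; exact hlam b a hab.symm
  have hab' : lam a - lam c - (lam b - lam c) ∈ Dtrig := by
    rw [sub_sub_sub_cancel_right]; exact hlam a b hab
  have h₁ := AYBERel.legFamily_combination hRhol
    (fun _ _ hs hs' hss' => aybeRel_legFamily haybe hab hbc hac hs hs' hss' (hlam a b hab)
      (hlam a c hac) hcb hbc')
    (znum_mem_Dtrig hab) (znum_mem_Dtrig hbc) hzac (hlam a b hab) (hlam a c hac) hcb hbc'
  have h₂ := AYBERel.legFamily_combination hRhol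
    (fun _ _ hs hs' hss' => aybeRel_legFamily_of_skewSym haybe hskew hab hbc hac hs hs' hss'
      (hlam b c hbc) (hlam a c hac) hba hab')
    (znum_mem_Dtrig hbc) (znum_mem_Dtrig hab) (by rwa [add_comm]) (hlam b c hbc) (hlam a c hac)
    hba hab'
  rw [znum_add_znum, sub_sub_sub_cancel_left, sub_sub_sub_cancel_left] at h₁
  rw [add_comm (znum n b c), znum_add_znum, sub_sub_sub_cancel_right,
    sub_sub_sub_cancel_right] at h₂
  have h₁v := congrArg (fun M => M.mulVec (F (lam ∘ Equiv.swap a b ∘ Equiv.swap b c))) h₁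
  have h₂v := congrArg (fun M => M.mulVec (F (lam ∘ Equiv.swap b c ∘ Equiv.swap a b))) h₂
  simp only [Matrix.add_mulVec, Matrix.smul_mulVec] at h₁v h₂v
  obtain ⟨⟨hσ₁, hσ₂⟩, hτ₁, hτ₂⟩ := comp_swap_swap_cycle lam hab hbc hac
  simp only [Fin.sum_univ_six, sharedPairs, Matrix.cons_val, commKernel, H2veeCoeff, IveeCoeff,
    Function.comp_apply, Equiv.swap_apply_left, Equiv.swap_apply_right,
    Equiv.swap_apply_of_ne_of_ne hac.symm hbc.symm, Equiv.swap_apply_of_ne_of_ne hab hac,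
    Equiv.swap_apply_of_ne_of_ne hab.symm hbc, hσ₁, hσ₂, hτ₁, hτ₂, Matrix.mul_smul,
    Matrix.smul_mul, Matrix.smul_mulVec]
  linear_combination (norm := module) h₁v + h₂v

end Hamiltonians

theorem Ivee_commutes_with_H2vee_general
    (n d : ℕ)
    (R : ℂ → ℂ → M2 d)
    (hRhol : ∀ a b, DifferentiableOn ℂ (fun p : ℂ × ℂ => R p.1 p.2 a b) (Dtrig ×ˢ Dtrig))
    (hskew : SkewSym Dtrig R) (haybe : AYBE Dtrig R) (hunit : UnitarityTrig Dtrig R)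
    (Λ : Set (Fin n → ℂ))
    (hΛD : ∀ lam ∈ Λ, ∀ i j : Fin n, i ≠ j → lam i - lam j ∈ Dtrig)
    (F : (Fin n → ℂ) → Uspin n d) :
    ∀ lam ∈ Λ, H2vee R (Ivee R F) lam = Ivee R (H2vee R F) lam := by
  intro lam hlam
  have hD := hΛD lam hlam
  have hdiag : ∑ p ∈ orderedPairs (Fin n),
      commKernel (H2veeCoeff R) (IveeCoeff R) F lam p p = 0 := by
    rw [Finset.sum_congr rfl fun p hp => commKernel_self hRhol hskew hunit F
      (Finset.mem_filter.1 hp).2.ne (hD _ _ (Finset.mem_filter.1 hp).2.ne), ← Finset.sum_smul,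
      Finset.sum_neg_distrib, sum_orderedPairs_sub_mul_deriv_invFourSinSqHalf, neg_zero,
      zero_smul]
  have htriple : ∀ t ∈ orderedTriples (Fin n), ∑ m, commKernel (H2veeCoeff R) (IveeCoeff R) F
      lam (sharedPairs t m).1 (sharedPairs t m).2 = 0 := by
    rintro ⟨a, b, c⟩ ht
    obtain ⟨hab, hbc⟩ := (Finset.mem_filter.1 ht).2
    exact sum_commKernel_sharedPairs_eq_zero hRhol haybe hskew F hD hab.ne hbc.ne
      (hab.trans hbc).ne
  have hdisjoint : ∀ r ∈ (orderedPairs (Fin n) ×ˢ orderedPairs (Fin n)).filter PairsDisjoint,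
      commKernel (H2veeCoeff R) (IveeCoeff R) F lam r.1 r.2 = 0 := by
    rintro ⟨⟨i, j⟩, ⟨k, l⟩⟩ hr
    obtain ⟨hik, hil, hjk, hjl⟩ := (Finset.mem_filter.1 hr).2
    exact commKernel_eq_zero_of_disjoint F lam hik hil hjk hjl
  rw [← sub_eq_zero]
  simp only [H2vee_eq_pairOp, Ivee_eq_pairOp]
  rw [pairOp_pairOp_sub, sum_orderedPairs_orderedPairs, hdiag, Finset.sum_eq_zero htriple,
    Finset.sum_eq_zero hdisjoint, add_zero, add_zero]

/-- the additional Hamiltonian `𝓘^∨` commutes with the deformed spin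
chain Hamiltonian `𝓗₂^∨` on holomorphic `U`-valued functions of `λ ∈ Λ` (the integrable
deformation of the Sechin–Zotov spin chain). -/
theorem Ivee_commutes_with_H2vee
    (n d : ℕ) (hn : 2 ≤ n) (hd : 1 ≤ d)
    (R : ℂ → ℂ → M2 d)
    (hRhol : ∀ a b, DifferentiableOn ℂ (fun p : ℂ × ℂ => R p.1 p.2 a b) (Dtrig ×ˢ Dtrig))
    (hskew : SkewSym Dtrig R) (haybe : AYBE Dtrig R) (hunit : UnitarityTrig Dtrig R)
    (r : ℂ → M2 d) (hreg : RegularityId Dtrig R r)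
    (Q Qinv : Matrix (Fin d) (Fin d) ℂ) (hQP : QuasiPeriodic Dtrig R Q Qinv)
    (Λ : Set (Fin n → ℂ)) (hΛopen : IsOpen Λ) (hΛne : Λ.Nonempty)
    (hΛperm : ∀ σ : Equiv.Perm (Fin n), ∀ lam ∈ Λ, (lam ∘ σ) ∈ Λ)
    (hΛD : ∀ lam ∈ Λ, ∀ i j : Fin n, i ≠ j → lam i - lam j ∈ Dtrig)
    (F : (Fin n → ℂ) → Uspin n d) (hF : DifferentiableOn ℂ F Λ) :
    ∀ lam ∈ Λ, H2vee R (Ivee R F) lam = Ivee R (H2vee R F) lam :=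
  Ivee_commutes_with_H2vee_general n d R hRhol hskew haybe hunit Λ hΛD F
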